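/- Let p be a prime not in {3, 5, 11} and N an integer with p ≤ N. If v_p(H_N) > 0, then N ≥ 5p. -/

import Mathlib

/-- The `n`-th harmonic number `H_n = ∑_{i=1}^n 1/i`, as a rational number. -/
def H (n : ℕ) : ℚ := ∑ i ∈ Finset.range n, (1 : ℚ) / (i + 1)

/-!
For `p ≤ N < 5p` put `k = ⌊N/p⌋ ≤ 4`. Separating the terms `1/i` with `p ∣ i` gives
`H_N = H_k / p + S`, where `S` is a sum of `p`-adic units, so `v_p(S) ≥ 0`. For
`p ∉ {2, 3, 5, 11}` the numbers `H_1, …, H_4` are `p`-adic units, hence `v_p(H_N) = -1`;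
for `p = 2`, `v_2(H_N) = -⌊log₂ N⌋ ≤ 0` for every `N`.
-/

open Finset

lemma H_eq_harmonic (n : ℕ) : H n = harmonic n := by
  simp only [H, harmonic, one_div, Nat.cast_add, Nat.cast_one]

lemma filter_dvd_Icc_one_eq_map {p : ℕ} (hp : 0 < p) (N : ℕ) :
    {i ∈ Icc 1 N | p ∣ i} = (Icc 1 (N / p)).map ⟨(p * ·), mul_right_injective₀ hp.ne'⟩ := by
  ext i
  simp only [mem_filter, mem_Icc, mem_map, Function.Embedding.coeFn_mk, Nat.le_div_iff_mul_le hp]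
  constructor
  · rintro ⟨⟨h1, hN⟩, j, rfl⟩
    exact ⟨j, ⟨Nat.pos_of_mul_pos_left h1, by linarith⟩, rfl⟩
  · rintro ⟨j, ⟨hj1, hjN⟩, rfl⟩
    exact ⟨⟨Nat.mul_pos hp hj1, by linarith⟩, dvd_mul_right p j⟩

lemma harmonic_eq_inv_mul_harmonic_div_add {p : ℕ} (hp : 0 < p) (N : ℕ) :
    harmonic N = (p : ℚ)⁻¹ * harmonic (N / p) + ∑ i ∈ Icc 1 N with ¬ p ∣ i, (i : ℚ)⁻¹ := by
  rw [harmonic_eq_sum_Icc, harmonic_eq_sum_Icc, ← sum_filter_add_sum_filter_not _ (p ∣ ·),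
    filter_dvd_Icc_one_eq_map hp, sum_map, mul_sum]
  simp only [Function.Embedding.coeFn_mk, Nat.cast_mul, mul_inv]

namespace padicValRat

variable {p : ℕ} [Fact p.Prime]

theorem sum_nonneg {ι : Type*} {s : Finset ι} {F : ι → ℚ}
    (hF : ∀ i ∈ s, 0 ≤ padicValRat p (F i)) : 0 ≤ padicValRat p (∑ i ∈ s, F i) := by
  classical
  induction s using Finset.induction_on with
  | empty => simp
  | insert a s ha ih =>
    rw [sum_insert ha]
    by_cases h0 : F a + ∑ i ∈ s, F i = 0
    · simp [h0]
    · exact (le_min (hF a (mem_insert_self a s)) (ih fun i hi => hF i (mem_insert_of_mem hi))).trans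
        (min_le_padicValRat_add h0)

end padicValRat

section

variable {p : ℕ} [Fact p.Prime]

lemma padicValRat_sum_inv_not_dvd_nonneg (s : Finset ℕ) :
    0 ≤ padicValRat p (∑ i ∈ s with ¬ p ∣ i, (i : ℚ)⁻¹) := by
  refine padicValRat.sum_nonneg fun i hi => ?_
  rw [padicValRat.inv, padicValRat.of_nat, padicValNat.eq_zero_of_not_dvd (mem_filter.1 hi).2]
  simp

theorem padicValRat_harmonic_eq_sub_one {N : ℕ} (hpN : p ≤ N)
    (h : padicValRat p (harmonic (N / p)) < 1) :
    padicValRat p (harmonic N) = padicValRat p (harmonic (N / p)) - 1 := by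
  have hp : 0 < p := (Fact.out : p.Prime).pos
  set T := (p : ℚ)⁻¹ * harmonic (N / p)
  set S := ∑ i ∈ Icc 1 N with ¬ p ∣ i, (i : ℚ)⁻¹
  have hH : 0 < harmonic (N / p) := harmonic_pos (Nat.div_pos hpN hp).ne'
  have hT : 0 < T := mul_pos (by positivity) hH
  have hS : 0 < S := by
    refine sum_pos (fun i hi => ?_) ⟨1, ?_⟩
    · have : 0 < i := (mem_Icc.1 (mem_filter.1 hi).1).1
      positivity
    · simp only [mem_filter, mem_Icc, le_refl, true_and, Nat.dvd_one]
      exact ⟨by omega, (Fact.out : p.Prime).ne_one⟩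
  have hvT : padicValRat p T = padicValRat p (harmonic (N / p)) - 1 := by
    rw [padicValRat.mul (by positivity) hH.ne', padicValRat.inv,
      padicValRat.self (Fact.out : p.Prime).one_lt]
    ring
  rw [harmonic_eq_inv_mul_harmonic_div_add hp,
    padicValRat.add_eq_of_lt (add_pos hT hS).ne' hT.ne' hS.ne'
      (by linarith [padicValRat_sum_inv_not_dvd_nonneg (p := p) (Icc 1 N)]), hvT]

/-- `H_1, …, H_4 = 1, 3/2, 11/6, 25/12`, whose numerators and denominators divide
`2² · 3 · 5² · 11`. -/
lemma padicValRat_harmonic_eq_zero_of_le_four (hp : p ∉ ({2, 3, 5, 11} : Set ℕ)) {k : ℕ}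
    (hk : k ≤ 4) : padicValRat p (harmonic k) = 0 := by
  have hpr : p.Prime := Fact.out
  have hunit : ∀ n : ℕ, n ∣ 2 ^ 2 * 3 * 5 ^ 2 * 11 → padicValRat p n = 0 := by
    intro n hn
    rw [padicValRat.of_nat, Nat.cast_eq_zero]
    refine padicValNat.eq_zero_of_not_dvd fun hpn => hp ?_
    have := hpn.trans hn
    simp only [hpr.dvd_mul, hpr.prime.dvd_pow_iff_dvd two_ne_zero, Nat.prime_dvd_prime_iff_eq hpr,
      Nat.prime_two, Nat.prime_three, Nat.prime_five, (by norm_num : Nat.Prime 11)] at this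
    simp only [Set.mem_insert_iff, Set.mem_singleton_iff]
    tauto
  have hfrac : ∀ a b : ℕ, a ∣ 2 ^ 2 * 3 * 5 ^ 2 * 11 → b ∣ 2 ^ 2 * 3 * 5 ^ 2 * 11 →
      padicValRat p ((a : ℚ) / b) = 0 := by
    intro a b ha hb
    have ha0 : a ≠ 0 := by rintro rfl; norm_num at ha
    have hb0 : b ≠ 0 := by rintro rfl; norm_num at hb
    rw [padicValRat.div (by exact_mod_cast ha0) (by exact_mod_cast hb0), hunit a ha, hunit b hb,
      sub_zero]
  interval_cases k
  · simp
  · simp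
  · convert hfrac 3 2 (by norm_num) (by norm_num) using 2
    norm_num [harmonic]
  · convert hfrac 11 6 (by norm_num) (by norm_num) using 2
    norm_num [harmonic, sum_range_succ]
  · convert hfrac 25 12 (by norm_num) (by norm_num) using 2
    norm_num [harmonic, sum_range_succ]

end

theorem vp_harmonic_pos_imp_five_p (p N : ℕ) (hp : p.Prime)
    (hp' : p ∉ ({3, 5, 11} : Set ℕ)) (hpN : p ≤ N)
    (h : 0 < padicValRat p (H N)) : 5 * p ≤ N := by
  have := Fact.mk hp
  rw [H_eq_harmonic] at h
  obtain rfl | hp2 := eq_or_ne p 2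
  · rw [padicValRat_two_harmonic] at h
    omega
  by_contra! hN
  have hk : padicValRat p (harmonic (N / p)) = 0 :=
    padicValRat_harmonic_eq_zero_of_le_four (by simp_all)
      (Nat.lt_succ_iff.1 (Nat.div_lt_of_lt_mul (by linarith)))
  have := padicValRat_harmonic_eq_sub_one hpN (by omega)
  omega
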